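/- arXiv:1007.0867 — 2 statements merged into one kernel-verified Lean document; each statement's English description precedes it below -/
import Mathlib

section
/- Fix a quaternion p lying in the slice ℝ + Iℝ and a quaternion q = x + Jy with J ∈ 𝕊 and y ∈ ℝ. Set z = x + Iy. Then for every n ∈ ℕ, the quaternion w(n) := ((1 - JI)/2)(z - p)ⁿ + ((1 + JI)/2)(z̄ - p)ⁿ (where z̄ = x - Iy) satisfies |w(n)| ≤ max(|z - p|, |z̄ - p|)ⁿ. -/
/-!
Both `(z - p)ⁿ` and `(z̄ - p)ⁿ` lie in the slice `ℝ + ℝI ≅ ℂ`, so it suffices to show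
`‖u α + v β‖ ≤ max ‖α‖ ‖β‖` for `α, β` in the slice, `u = (1 - JI)/2`, `v = (1 + JI)/2`.
The two summands are orthogonal: since `re` is invariant under cyclic permutations, their inner
product is `re (α β̄ · v̄ u)`, and `v̄ u = (IJ - JI)/4` is orthogonal to the slice. Hence
`‖u α + v β‖² = ‖u‖² ‖α‖² + ‖v‖² ‖β‖²`, and `‖u‖² + ‖v‖² = 1` by the parallelogram law.
-/

open Quaternion ComplexConjugate

namespace Quaternion

variable {I J : ℍ[ℝ]}

theorem re_mul_comm (a b : ℍ[ℝ]) : (a * b).re = (b * a).re := by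
  simp only [re_mul]; ring

theorem norm_eq_one_of_sq_eq_neg_one (hI : I ^ 2 = -1) : ‖I‖ = 1 := by
  have h : ‖I‖ ^ 2 = 1 := by rw [← norm_pow, hI, norm_neg, norm_one]
  exact (pow_eq_one_iff_of_nonneg (norm_nonneg I) two_ne_zero).1 h

theorem star_eq_neg_of_sq_eq_neg_one (hI : I ^ 2 = -1) : star I = -I := by
  rw [star_eq_neg, ← sq_eq_neg_normSq, normSq_eq_norm_mul_self, norm_eq_one_of_sq_eq_neg_one hI,
    hI, mul_one, coe_one]

theorem div_two_eq_smul (a : ℍ[ℝ]) : a / 2 = (2⁻¹ : ℝ) • a := by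
  rw [div_eq_mul_inv, ← mul_coe_eq_smul, coe_inv]; rfl

-- The slice `ℝ + ℝI` is the range of this embedding of `ℂ` sending `i` to `I`.
def sliceHom (hI : I ^ 2 = -1) : ℂ →ₐ[ℝ] ℍ[ℝ] := Complex.lift ⟨I, by rwa [← sq]⟩

theorem sliceHom_apply (hI : I ^ 2 = -1) (w : ℂ) :
    sliceHom hI w = (w.re : ℍ[ℝ]) + w.im • I := by
  simp [sliceHom, algebraMap_def]

theorem star_sliceHom (hI : I ^ 2 = -1) (w : ℂ) :
    star (sliceHom hI w) = sliceHom hI (conj w) := by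
  simp [sliceHom_apply, star_eq_neg_of_sq_eq_neg_one hI]

theorem re_slice_mul_commutator_eq_zero (c d : ℝ) :
    (((c : ℍ[ℝ]) + d • I) * (I * J - J * I)).re = 0 := by
  have h₁ : (I * J - J * I).re = 0 := by rw [re_sub, re_mul_comm, sub_self]
  have h₂ : (I * (I * J - J * I)).re = 0 := by
    rw [mul_sub, re_sub, re_mul_comm, mul_assoc, sub_self]
  rw [add_mul, smul_mul_assoc, re_add, re_smul, coe_mul_eq_smul, re_smul, h₁, h₂]; simp

theorem inner_mul_sliceHom_eq_zero (hI : I ^ 2 = -1) (hJ : J ^ 2 = -1) (a b : ℂ) :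
    inner ℝ ((1 - J * I) * sliceHom hI a) ((1 + J * I) * sliceHom hI b) = 0 := by
  have hIJ : I * J * (J * I) = 1 := by
    rw [mul_assoc, ← mul_assoc J, ← sq, hJ, neg_one_mul, mul_neg, ← sq, hI, neg_neg]
  have hstar : star (1 + J * I) * (1 - J * I) = I * J - J * I := by
    rw [star_add, star_one, star_mul, star_eq_neg_of_sq_eq_neg_one hI,
      star_eq_neg_of_sq_eq_neg_one hJ, neg_mul_neg, add_mul, one_mul, mul_sub, mul_one, hIJ]
    abel
  calc inner ℝ ((1 - J * I) * sliceHom hI a) ((1 + J * I) * sliceHom hI b)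
      = (sliceHom hI (a * conj b) * (star (1 + J * I) * (1 - J * I))).re := by
        rw [inner_def, star_mul, star_sliceHom, map_mul, mul_assoc, re_mul_comm]
        simp only [mul_assoc]
    _ = 0 := by rw [hstar, sliceHom_apply]; exact re_slice_mul_commutator_eq_zero _ _

theorem norm_one_sub_mul_sq_add_norm_one_add_mul_sq (hI : I ^ 2 = -1) (hJ : J ^ 2 = -1) :
    ‖1 - J * I‖ ^ 2 + ‖1 + J * I‖ ^ 2 = 4 := by
  have h := parallelogram_law_with_norm ℝ (1 : ℍ[ℝ]) (J * I)
  rw [norm_one, norm_mul, norm_eq_one_of_sq_eq_neg_one hI, norm_eq_one_of_sq_eq_neg_one hJ] at h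
  linarith

theorem norm_half_sub_mul_add_half_add_mul_le (hI : I ^ 2 = -1) (hJ : J ^ 2 = -1) (a b : ℂ) :
    ‖(1 - J * I) / 2 * sliceHom hI a + (1 + J * I) / 2 * sliceHom hI b‖ ≤
      max ‖sliceHom hI a‖ ‖sliceHom hI b‖ := by
  set M := max ‖sliceHom hI a‖ ‖sliceHom hI b‖
  have hM : 0 ≤ M := (norm_nonneg _).trans (le_max_left _ _)
  have hsq : ‖(1 - J * I) * sliceHom hI a + (1 + J * I) * sliceHom hI b‖ ^ 2 ≤ (2 * M) ^ 2 :=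
    calc _ = ‖1 - J * I‖ ^ 2 * ‖sliceHom hI a‖ ^ 2 + ‖1 + J * I‖ ^ 2 * ‖sliceHom hI b‖ ^ 2 := by
          rw [sq, norm_add_sq_eq_norm_sq_add_norm_sq_real (inner_mul_sliceHom_eq_zero hI hJ a b)]
          simp only [norm_mul]; ring
      _ ≤ ‖1 - J * I‖ ^ 2 * M ^ 2 + ‖1 + J * I‖ ^ 2 * M ^ 2 := by
          gcongr
          exacts [le_max_left _ _, le_max_right _ _]
      _ = (2 * M) ^ 2 := by rw [← add_mul, norm_one_sub_mul_sq_add_norm_one_add_mul_sq hI hJ]; ring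
  have hle := (pow_le_pow_iff_left₀ (norm_nonneg _) (by positivity) two_ne_zero).1 hsq
  rw [div_two_eq_smul, div_two_eq_smul, smul_mul_assoc, smul_mul_assoc, ← smul_add, norm_smul,
    Real.norm_of_nonneg (by norm_num)]
  linarith

end Quaternion

/-- The estimate `|(q-p)^{*n}| ≤ σ(q,p)ⁿ`: the value of the n-th *-power of `q - p` at
`q = x + Jy`, computed via the Representation Formula, is bounded by
`max(|z - p|, |z̄ - p|)ⁿ` where `z = x + Iy`. -/
theorem star_power_estimate (I J : ℍ[ℝ]) (hI : I ^ 2 = -1) (hJ : J ^ 2 = -1)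
    (px py x y : ℝ) (p z zb : ℍ[ℝ])
    (hp : p = (px : ℍ[ℝ]) + py • I)
    (hz : z = (x : ℍ[ℝ]) + y • I) (hzb : zb = (x : ℍ[ℝ]) - y • I) :
    ∀ n : ℕ,
      ‖((1 - J * I) / 2) * (z - p) ^ n + ((1 + J * I) / 2) * (zb - p) ^ n‖ ≤
        (max ‖z - p‖ ‖zb - p‖) ^ n := by
  intro n
  have hzp : z - p = sliceHom hI ⟨x - px, y - py⟩ := by
    rw [sliceHom_apply, hz, hp]; push_cast; module
  have hzbp : zb - p = sliceHom hI ⟨x - px, -y - py⟩ := by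
    rw [sliceHom_apply, hzb, hp]; push_cast; module
  calc _ ≤ max ‖(z - p) ^ n‖ ‖(zb - p) ^ n‖ := by
        rw [hzp, hzbp, ← map_pow, ← map_pow]
        exact norm_half_sub_mul_add_half_add_mul_le hI hJ _ _
    _ ≤ (max ‖z - p‖ ‖zb - p‖) ^ n := by
        rw [norm_pow, norm_pow]
        exact max_le (by gcongr; exact le_max_left _ _) (by gcongr; exact le_max_right _ _)
end

section
/- The function σ on ℍ × ℍ (equal to |q - p| if p, q share a slice ℝ + Iℝ, and to √((Re q - Re p)² + (|Im q| + |Im p|)²) otherwise) is lower semicontinuous with respect to the Euclidean topology on ℍ × ℍ, and the function τ (equal to |q - p| if p, q share a slice, and to √((Re q - Re p)² + (|Im q| - |Im p|)²) otherwise) is upper semicontinuous. -/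
open Quaternion

/-- Two quaternions lie on the same complex slice `ℝ + Iℝ` for some imaginary unit `I`. -/
def sameSlice (p q : ℍ[ℝ]) : Prop :=
  ∃ I : ℍ[ℝ], I ^ 2 = -1 ∧ (∃ x y : ℝ, p = (x : ℍ[ℝ]) + y • I) ∧
    (∃ x y : ℝ, q = (x : ℍ[ℝ]) + y • I)

open Classical in
noncomputable def sliceSigma (q p : ℍ[ℝ]) : ℝ :=
  if sameSlice p q then ‖q - p‖
  else Real.sqrt ((q.re - p.re) ^ 2 + (‖q.im‖ + ‖p.im‖) ^ 2)

open Classical in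
noncomputable def sliceTau (q p : ℍ[ℝ]) : ℝ :=
  if sameSlice p q then ‖q - p‖
  else Real.sqrt ((q.re - p.re) ^ 2 + (‖q.im‖ - ‖p.im‖) ^ 2)

/-!
Two quaternions share a slice exactly when they commute, so the pairs sharing a slice form a
closed subset of `ℍ × ℍ`. Off that set `σ` and `τ` are given by continuous formulas, and on it
they equal the continuous function `‖q - p‖`, which is `≤ σ` and `≥ τ` everywhere (by the
triangle inequality in `Im ℍ`, after splitting `‖q - p‖²` into real and imaginary parts).
Gluing a lower semicontinuous function on a closed set to a larger lower semicontinuous one on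
its open complement gives a lower semicontinuous function; dually for `τ`.
-/

section Semicontinuity

variable {α β : Type*} [TopologicalSpace α] [Preorder β] {p : α → Prop} [DecidablePred p]
  {f g : α → β}

theorem lowerSemicontinuous_ite_of_isClosed (hp : IsClosed {x | p x})
    (hf : LowerSemicontinuous f) (hg : LowerSemicontinuous g) (hfg : ∀ x, ¬p x → f x ≤ g x) :
    LowerSemicontinuous fun x => if p x then f x else g x := by
  intro x y hy
  by_cases hx : p x
  · simp only [hx, if_true] at hy
    filter_upwards [hf x y hy] with z hz
    split_ifs with hz'
    exacts [hz, hz.trans_le (hfg z hz')]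
  · simp only [hx, if_false] at hy
    filter_upwards [hp.isOpen_compl.mem_nhds hx, hg x y hy] with z hz' hz
    rwa [if_neg (show ¬p z from hz')]

theorem upperSemicontinuous_ite_of_isClosed (hp : IsClosed {x | p x})
    (hf : UpperSemicontinuous f) (hg : UpperSemicontinuous g) (hgf : ∀ x, ¬p x → g x ≤ f x) :
    UpperSemicontinuous fun x => if p x then f x else g x :=
  lowerSemicontinuous_ite_of_isClosed (β := βᵒᵈ) hp hf hg hgf

end Semicontinuity

namespace Quaternion

theorem commute_im_of_commute {R : Type*} [CommRing R] {a b : ℍ[R]} (h : Commute a b) :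
    Commute a.im b.im := by
  rw [eq_sub_of_add_eq' (re_add_im a), eq_sub_of_add_eq' (re_add_im b)]
  exact (h.sub_right (coe_commute _ _).symm).sub_left
    ((coe_commute _ _).sub_right (coe_commute _ _))

/-- Commuting pure imaginary quaternions have a self-adjoint, hence real, product `u * v`;
then `normSq u • v = star u * (u * v)` is a real multiple of `star u = -u`. -/
theorem exists_normSq_smul_eq_smul_of_commute {R : Type*} [CommRing R] [NoZeroDivisors R]
    [CharZero R] {u v : ℍ[R]} (h : Commute u v) (hu : u.re = 0) (hv : v.re = 0) :
    ∃ r : R, normSq u • v = r • u := by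
  have hreal : u * v = (u * v).re := star_eq_self.mp <| by
    rw [star_mul, star_eq_neg.mpr hu, star_eq_neg.mpr hv, neg_mul_neg, h.eq]
  refine ⟨-(u * v).re, ?_⟩
  calc normSq u • v = star u * (u * v) := by rw [← mul_assoc, star_mul_self, coe_mul_eq_smul]
    _ = -(u * v).re • u := by
      rw [hreal, star_eq_neg.mpr hu, re_coe, mul_coe_eq_smul, neg_smul, smul_neg]


theorem exists_im_eq_smul_im_of_commute {R : Type*} [Field R] [LinearOrder R]
    [IsStrictOrderedRing R] {a b : ℍ[R]} (h : Commute a b) (ha : a.im ≠ 0) :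
    ∃ c : R, b.im = c • a.im := by
  obtain ⟨r, hr⟩ := exists_normSq_smul_eq_smul_of_commute (commute_im_of_commute h) a.re_im b.re_im
  refine ⟨(normSq a.im)⁻¹ * r, ?_⟩
  rw [mul_smul, ← hr, inv_smul_smul₀ (normSq_ne_zero.mpr ha)]

theorem exists_sq_eq_neg_one_and_eq_smul {u : ℍ[ℝ]} (hu : u.re = 0) :
    ∃ I : ℍ[ℝ], I ^ 2 = -1 ∧ ∃ t : ℝ, u = t • I := by
  obtain rfl | hu0 := eq_or_ne u 0
  · exact ⟨(Complex.I : ℍ[ℝ]), by ext <;> simp [sq], 0, (zero_smul _ _).symm⟩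
  have hnorm : ‖u‖ ≠ 0 := norm_ne_zero_iff.mpr hu0
  refine ⟨‖u‖⁻¹ • u, ?_, ‖u‖, (smul_inv_smul₀ hnorm u).symm⟩
  rw [sq_eq_neg_normSq.mpr (by simp [hu]), normSq_smul, normSq_eq_norm_mul_self]
  field_simp
  simp

theorem norm_sq_eq_re_sq_add_norm_im_sq (a : ℍ[ℝ]) : ‖a‖ ^ 2 = a.re ^ 2 + ‖a.im‖ ^ 2 := by
  rw [sq ‖a‖, sq ‖a.im‖, ← normSq_eq_norm_mul_self, ← normSq_eq_norm_mul_self, normSq_def',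
    normSq_def']
  simp only [re_im, imI_im, imJ_im, imK_im]
  ring

theorem norm_sub_eq_sqrt (q p : ℍ[ℝ]) :
    ‖q - p‖ = √((q.re - p.re) ^ 2 + ‖q.im - p.im‖ ^ 2) := by
  rw [← re_sub, ← im_sub, ← norm_sq_eq_re_sq_add_norm_im_sq, Real.sqrt_sq (norm_nonneg _)]

end Quaternion

open Quaternion

theorem sameSlice_of_im_eq_smul {p q I : ℍ[ℝ]} (hI : I ^ 2 = -1) {s t : ℝ} (hp : p.im = s • I)
    (hq : q.im = t • I) : sameSlice p q :=
  ⟨I, hI, ⟨p.re, s, by rw [← hp, re_add_im]⟩, ⟨q.re, t, by rw [← hq, re_add_im]⟩⟩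

theorem sameSlice_iff_commute {p q : ℍ[ℝ]} : sameSlice p q ↔ Commute p q := by
  constructor
  · rintro ⟨I, -, ⟨x, y, rfl⟩, ⟨x', y', rfl⟩⟩
    exact (coe_commute _ _).add_left
      ((coe_commute _ _).symm.add_right (((Commute.refl I).smul_left y).smul_right y'))
  · intro h
    by_cases hp : p.im = 0
    · obtain ⟨I, hI, t, ht⟩ := exists_sq_eq_neg_one_and_eq_smul q.re_im
      exact sameSlice_of_im_eq_smul hI (by rw [hp, zero_smul]) ht
    · obtain ⟨c, hc⟩ := exists_im_eq_smul_im_of_commute h hp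
      obtain ⟨I, hI, t, ht⟩ := exists_sq_eq_neg_one_and_eq_smul p.re_im
      exact sameSlice_of_im_eq_smul hI ht (by rw [hc, ht, smul_smul])

theorem isClosed_sameSlice : IsClosed {x : ℍ[ℝ] × ℍ[ℝ] | sameSlice x.2 x.1} := by
  simp_rw [sameSlice_iff_commute, commute_iff_eq]
  exact isClosed_eq (by fun_prop) (by fun_prop)

theorem norm_sub_le_sqrt_add (q p : ℍ[ℝ]) :
    ‖q - p‖ ≤ √((q.re - p.re) ^ 2 + (‖q.im‖ + ‖p.im‖) ^ 2) := by
  rw [norm_sub_eq_sqrt]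
  gcongr
  exact norm_sub_le _ _

theorem sqrt_sub_le_norm_sub (q p : ℍ[ℝ]) :
    √((q.re - p.re) ^ 2 + (‖q.im‖ - ‖p.im‖) ^ 2) ≤ ‖q - p‖ := by
  rw [norm_sub_eq_sqrt]
  gcongr √(_ + ?_)
  exact sq_le_sq.mpr (by simpa using abs_norm_sub_norm_le q.im p.im)

/-- `σ` is lower semicontinuous and `τ` is upper semicontinuous on `ℍ × ℍ`. -/
theorem sigma_lsc_tau_usc :
    LowerSemicontinuous (fun qp : ℍ[ℝ] × ℍ[ℝ] => sliceSigma qp.1 qp.2) ∧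
    UpperSemicontinuous (fun qp : ℍ[ℝ] × ℍ[ℝ] => sliceTau qp.1 qp.2) := by
  classical
  have hnorm : Continuous fun qp : ℍ[ℝ] × ℍ[ℝ] => ‖qp.1 - qp.2‖ := by fun_prop
  have hre := continuous_re
  have him := continuous_im
  constructor
  · exact lowerSemicontinuous_ite_of_isClosed isClosed_sameSlice hnorm.lowerSemicontinuous
      (Continuous.lowerSemicontinuous (by fun_prop)) fun qp _ => norm_sub_le_sqrt_add qp.1 qp.2
  · exact upperSemicontinuous_ite_of_isClosed isClosed_sameSlice hnorm.upperSemicontinuous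
      (Continuous.upperSemicontinuous (by fun_prop)) fun qp _ => sqrt_sub_le_norm_sub qp.1 qp.2
end
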